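/- Let T be a double star of order n = a + b + 2 with centers u,v where u has a ≥ 2 leaves and v has b leaves, 1 ≤ b ≤ a. Then the number of odd sets of T equals (n(n−1) − 2 − a(a−1) − b(b−1))/2, and this quantity is at least n(n−a)/2. -/

import Mathlib

open SimpleGraph Finset
open scoped Classical

variable {V : Type*}

/-- The Seidel matrix of a graph: zero diagonal, `-1` for adjacent pairs, `+1` otherwise. -/
noncomputable def seidelMatrix (G : SimpleGraph V) : Matrix V V ℝ :=
  fun i j => if i = j then 0 else if G.Adj i j then -1 else 1

theorem seidelMatrix_isHermitian (G : SimpleGraph V) : (seidelMatrix G).IsHermitian := by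
  unfold Matrix.IsHermitian
  ext i j
  by_cases h : i = j
  · subst h; simp [seidelMatrix]
  · simp [seidelMatrix, Matrix.conjTranspose_apply, h, Ne.symm h, G.adj_comm j i]

/-- The Seidel energy: sum of absolute values of the eigenvalues of the Seidel matrix. -/
noncomputable def seidelEnergy [Fintype V] (G : SimpleGraph V) : ℝ :=
  ∑ i, |(seidelMatrix_isHermitian G).eigenvalues i|

/-- Number of edges with one endpoint in `X` and the other in `Y` (for disjoint `X Y`). -/
noncomputable def edgeCount (G : SimpleGraph V) (X Y : Finset V) : ℕ :=
  ∑ x ∈ X, ∑ y ∈ Y, if G.Adj x y then 1 else 0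

/-- `(X, Y)` is an odd pair: disjoint 2-element sets with an odd number of edges between them. -/
def IsOddPair (G : SimpleGraph V) (X Y : Finset V) : Prop :=
  X.card = 2 ∧ Y.card = 2 ∧ Disjoint X Y ∧ Odd (edgeCount G X Y)

/-- `X` is an odd set: a 2-element set which is the first component of some odd pair. -/
def IsOddSet (G : SimpleGraph V) (X : Finset V) : Prop :=
  X.card = 2 ∧ ∃ Y : Finset V, Y.card = 2 ∧ Disjoint X Y ∧ Odd (edgeCount G X Y)

/-- The graph `Λ(G)` whose edges are the odd sets of `G`. -/
def lambdaGraph (G : SimpleGraph V) : SimpleGraph V where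
  Adj u v := u ≠ v ∧ IsOddSet G {u, v}
  symm := by
    refine ⟨?_⟩
    rintro u v ⟨h1, h2⟩
    exact ⟨h1.symm, by rwa [Finset.pair_comm]⟩
  loopless := by refine ⟨?_⟩; rintro u ⟨h1, -⟩; exact h1 rfl

/-- Seidel switching of `G` with respect to the partition `(S, Sᶜ)`. -/
def seidelSwitch (G : SimpleGraph V) (S : Set V) : SimpleGraph V where
  Adj u v := u ≠ v ∧ (G.Adj u v ↔ ((u ∈ S) ↔ (v ∈ S)))
  symm := by
    refine ⟨?_⟩
    rintro u v ⟨h1, h2⟩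
    refine ⟨h1.symm, ?_⟩
    rw [G.adj_comm]
    tauto
  loopless := by refine ⟨?_⟩; rintro u ⟨h1, -⟩; exact h1 rfl

/-- The degree of a vertex. -/
noncomputable def degree' (G : SimpleGraph V) (v : V) : ℕ := Nat.card {x : V // G.Adj v x}

/-- `D(G)`: the maximum number of leaves adjacent to a single vertex. -/
noncomputable def maxLeafCount [Fintype V] (G : SimpleGraph V) : ℕ :=
  Finset.univ.sup fun w => Nat.card {u : V // G.Adj w u ∧ degree' G u = 1}

/-- The number of odd pairs of `G`. -/
noncomputable def numOddPairs [Fintype V] (G : SimpleGraph V) : ℕ :=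
  Nat.card {p : Finset V × Finset V // IsOddPair G p.1 p.2}

/-- The number of odd sets of `G`. -/
noncomputable def numOddSets [Fintype V] (G : SimpleGraph V) : ℕ :=
  Nat.card {X : Finset V // IsOddSet G X}

/-- `G` is a star: some center vertex lies on every edge. -/
def IsStar (G : SimpleGraph V) : Prop := ∃ c : V, ∀ u v : V, G.Adj u v → u = c ∨ v = c

/-!
The number of edges from `{x, y}` to a vertex `w` is odd exactly when `w` is adjacent to exactly
one of `x` and `y`, so `{x, y}` is an odd set iff this parity is not constant on the vertices
outside `{x, y}`. In a double star the parity is constantly odd for the two centers, constantly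
even for two leaves at the same center, and takes both values for every other pair. Hence the odd
sets are the `n.choose 2` pairs minus `1 + a.choose 2 + b.choose 2`.
-/

section OddSet

variable {G : SimpleGraph V} {x y w p q : V}

theorem edgeCount_pair_left (hxy : x ≠ y) (Y : Finset V) :
    edgeCount G {x, y} Y = edgeCount G {x} Y + edgeCount G {y} Y := by
  simp only [edgeCount, Finset.sum_pair hxy, Finset.sum_singleton]

theorem edgeCount_pair_right (X : Finset V) (hpq : p ≠ q) :
    edgeCount G X {p, q} = edgeCount G X {p} + edgeCount G X {q} := by
  simp only [edgeCount, Finset.sum_pair hpq, Finset.sum_singleton, Finset.sum_add_distrib]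

theorem odd_edgeCount_pair_singleton_iff (hxy : x ≠ y) :
    Odd (edgeCount G {x, y} {w}) ↔ ¬(G.Adj x w ↔ G.Adj y w) := by
  rw [edgeCount_pair_left hxy]
  simp only [edgeCount, Finset.sum_singleton]
  by_cases hx : G.Adj x w <;> by_cases hy : G.Adj y w <;> simp [hx, hy]

theorem isOddSet_pair_iff :
    IsOddSet G {x, y} ↔ x ≠ y ∧ ∃ p ∉ ({x, y} : Finset V), ∃ q ∉ ({x, y} : Finset V),
      (G.Adj x p ↔ G.Adj y p) ∧ ¬(G.Adj x q ↔ G.Adj y q) := by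
  constructor
  · rintro ⟨hcard, Y, hY, hdisj, hodd⟩
    have hxy : x ≠ y := Finset.card_pair_eq_two_iff.mp hcard
    obtain ⟨p, q, hpq, rfl⟩ := Finset.card_eq_two.mp hY
    have hp : p ∉ ({x, y} : Finset V) := Finset.disjoint_right.mp hdisj (by simp)
    have hq : q ∉ ({x, y} : Finset V) := Finset.disjoint_right.mp hdisj (by simp)
    rw [edgeCount_pair_right _ hpq, Nat.odd_add, ← Nat.not_odd_iff_even,
      odd_edgeCount_pair_singleton_iff hxy, odd_edgeCount_pair_singleton_iff hxy] at hodd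
    refine ⟨hxy, ?_⟩
    by_cases h : G.Adj x p ↔ G.Adj y p
    · exact ⟨p, hp, q, hq, h, by tauto⟩
    · exact ⟨q, hq, p, hp, by tauto, h⟩
  · rintro ⟨hxy, p, hp, q, hq, hpsame, hqsep⟩
    have hpq : p ≠ q := by rintro rfl; exact hqsep hpsame
    refine ⟨Finset.card_pair_eq_two_iff.mpr hxy, {p, q}, Finset.card_pair hpq, ?_, ?_⟩
    · simp only [Finset.disjoint_insert_right, Finset.disjoint_singleton_right]; exact ⟨hp, hq⟩
    · rw [edgeCount_pair_right _ hpq, Nat.odd_add, ← Nat.not_odd_iff_even,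
        odd_edgeCount_pair_singleton_iff hxy, odd_edgeCount_pair_singleton_iff hxy]
      tauto

theorem not_isOddSet_pair_of_forall_adj_iff (h : ∀ w, G.Adj x w ↔ G.Adj y w) :
    ¬IsOddSet G {x, y} := by
  rw [isOddSet_pair_iff]
  rintro ⟨-, -, -, q, -, -, hq⟩
  exact hq (h q)

theorem not_isOddSet_pair_of_forall_not_adj_iff
    (h : ∀ w ∉ ({x, y} : Finset V), ¬(G.Adj x w ↔ G.Adj y w)) : ¬IsOddSet G {x, y} := by
  rw [isOddSet_pair_iff]
  rintro ⟨-, p, hp, -, -, hpsame, -⟩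
  exact h p hp hpsame

end OddSet

theorem numOddSets_eq_card_filter [Fintype V] (G : SimpleGraph V) :
    numOddSets G = #(univ.filter (IsOddSet G)) := by
  rw [numOddSets, Nat.card_eq_fintype_card, Fintype.card_subtype]

theorem natCard_adj_ne_eq_card_erase_neighborFinset [Fintype V] (G : SimpleGraph V) (c d : V) :
    Nat.card {x : V // G.Adj c x ∧ x ≠ d} = #((G.neighborFinset c).erase d) := by
  rw [Nat.card_eq_fintype_card, Fintype.card_subtype]
  congr 1
  ext x
  simp [and_comm]

theorem adj_iff_eq_of_degree'_eq_one {G : SimpleGraph V} {x c w : V} (hd : degree' G x = 1)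
    (hc : G.Adj x c) : G.Adj x w ↔ w = c := by
  refine ⟨fun hw => ?_, fun hw => hw ▸ hc⟩
  rw [degree', Nat.card_eq_one_iff_unique] at hd
  exact congrArg Subtype.val (hd.1.allEq ⟨w, hw⟩ ⟨c, hc⟩)

def IsDoubleStar (G : SimpleGraph V) (u v : V) : Prop :=
  G.Adj u v ∧ ∀ x, x ≠ u → x ≠ v → degree' G x = 1 ∧ (G.Adj x u ∨ G.Adj x v)

namespace IsDoubleStar

variable {G : SimpleGraph V} {u v x x' y : V}

theorem symm (h : IsDoubleStar G u v) : IsDoubleStar G v u :=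
  ⟨h.1.symm, fun x hxv hxu => (h.2 x hxu hxv).imp_right Or.symm⟩

theorem leaf_adj_iff (h : IsDoubleStar G u v) (hx : G.Adj u x) (hxv : x ≠ v) {w : V} :
    G.Adj x w ↔ w = u :=
  adj_iff_eq_of_degree'_eq_one (h.2 x hx.ne' hxv).1 hx.symm

theorem not_adj_leaf_of_other (h : IsDoubleStar G u v) (hx : G.Adj u x) (hxv : x ≠ v) :
    ¬G.Adj v x := fun hvx => h.1.ne ((h.leaf_adj_iff hx hxv).mp hvx.symm).symm

theorem leaf_ne_leaf_of_other (h : IsDoubleStar G u v) (hx : G.Adj u x) (hxv : x ≠ v)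
    (hy : G.Adj v y) : x ≠ y := by
  rintro rfl
  exact h.not_adj_leaf_of_other hx hxv hy

theorem eq_or_eq_or_leaf (h : IsDoubleStar G u v) (x : V) :
    x = u ∨ x = v ∨ (G.Adj u x ∧ x ≠ v) ∨ (G.Adj v x ∧ x ≠ u) := by
  by_cases hxu : x = u
  · exact .inl hxu
  by_cases hxv : x = v
  · exact .inr (.inl hxv)
  rcases (h.2 x hxu hxv).2 with hxu' | hxv'
  · exact .inr (.inr (.inl ⟨hxu'.symm, hxv⟩))
  · exact .inr (.inr (.inr ⟨hxv'.symm, hxu⟩))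

theorem isOddSet_center_leaf (h : IsDoubleStar G u v) (hx : G.Adj u x) (hxv : x ≠ v)
    (hy : G.Adj v y) (hyu : y ≠ u) : IsOddSet G {u, x} := by
  have hxy := h.leaf_ne_leaf_of_other hx hxv hy
  refine isOddSet_pair_iff.mpr ⟨hx.ne, y, ?_, v, ?_, ?_, ?_⟩
  · simp [hyu, hxy.symm]
  · simp [h.1.ne.symm, hxv.symm]
  · simp [h.leaf_adj_iff hx hxv, G.adj_comm u, h.symm.leaf_adj_iff hy hyu, h.1.ne, hyu]
  · simp [h.1, h.leaf_adj_iff hx hxv, h.1.ne.symm]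

theorem isOddSet_center_leaf_of_other (h : IsDoubleStar G u v) (hy : G.Adj v y) (hyu : y ≠ u)
    (hx : G.Adj u x) (hxv : x ≠ v) : IsOddSet G {u, y} := by
  have hxy := h.leaf_ne_leaf_of_other hx hxv hy
  refine isOddSet_pair_iff.mpr ⟨hyu.symm, v, ?_, x, ?_, ?_, ?_⟩
  · simp [h.1.ne.symm, hy.ne]
  · simp [hx.ne', hxy]
  · simp [h.1, hy.symm]
  · simp [hx, h.symm.leaf_adj_iff hy hyu, hxv]

theorem isOddSet_leaf_leaf_of_other (h : IsDoubleStar G u v) (hx : G.Adj u x) (hxv : x ≠ v)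
    (hx' : G.Adj u x') (hx'v : x' ≠ v) (hxx' : x ≠ x') (hy : G.Adj v y) (hyu : y ≠ u) :
    IsOddSet G {x, y} := by
  refine isOddSet_pair_iff.mpr ⟨h.leaf_ne_leaf_of_other hx hxv hy, x', ?_, u, ?_, ?_, ?_⟩
  · simp [hxx'.symm, h.leaf_ne_leaf_of_other hx' hx'v hy]
  · simp [hx.ne, hyu.symm]
  · simp [h.leaf_adj_iff hx hxv, h.symm.leaf_adj_iff hy hyu, hx'.ne', hx'v]
  · simp [h.leaf_adj_iff hx hxv, h.symm.leaf_adj_iff hy hyu, h.1.ne]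

theorem not_isOddSet_centers (h : IsDoubleStar G u v) : ¬IsOddSet G {u, v} := by
  refine not_isOddSet_pair_of_forall_not_adj_iff fun w hw => ?_
  simp only [Finset.mem_insert, Finset.mem_singleton, not_or] at hw
  rcases h.eq_or_eq_or_leaf w with rfl | rfl | ⟨hw', hwv⟩ | ⟨hw', hwu⟩
  · exact absurd rfl hw.1
  · exact absurd rfl hw.2
  · simp [hw', h.not_adj_leaf_of_other hw' hwv]
  · simp [hw', h.symm.not_adj_leaf_of_other hw' hwu]

theorem not_isOddSet_leaves (h : IsDoubleStar G u v) (hx : G.Adj u x) (hxv : x ≠ v)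
    (hx' : G.Adj u x') (hx'v : x' ≠ v) : ¬IsOddSet G {x, x'} :=
  not_isOddSet_pair_of_forall_adj_iff fun _ => by
    rw [h.leaf_adj_iff hx hxv, h.leaf_adj_iff hx' hx'v]

theorem isOddSet_center_pair (h : IsDoubleStar G u v) (hu : ∃ x, G.Adj u x ∧ x ≠ v)
    (hv : ∃ x, G.Adj v x ∧ x ≠ u) (hyu : y ≠ u) (hyv : y ≠ v) : IsOddSet G {u, y} := by
  obtain ⟨x, hx, hxv⟩ := hu
  obtain ⟨x', hx', hx'u⟩ := hv
  rcases h.eq_or_eq_or_leaf y with rfl | rfl | ⟨hy, -⟩ | ⟨hy, -⟩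
  · exact absurd rfl hyu
  · exact absurd rfl hyv
  · exact h.isOddSet_center_leaf hy hyv hx' hx'u
  · exact h.isOddSet_center_leaf_of_other hy hyu hx hxv

section Fintype

variable [Fintype V]

theorem isOddSet_iff (h : IsDoubleStar G u v) (hu : 1 < #((G.neighborFinset u).erase v))
    (hv : ((G.neighborFinset v).erase u).Nonempty) {X : Finset V} :
    IsOddSet G X ↔ #X = 2 ∧ X ∉ insert {u, v}
      (((G.neighborFinset u).erase v).powersetCard 2 ∪
        ((G.neighborFinset v).erase u).powersetCard 2) := by
  have hu' : ∃ x, G.Adj u x ∧ x ≠ v := by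
    obtain ⟨x, hx⟩ := Finset.card_pos.mp (zero_lt_one.trans hu)
    exact ⟨x, by simpa [and_comm] using hx⟩
  have hv' : ∃ x, G.Adj v x ∧ x ≠ u := by
    obtain ⟨x, hx⟩ := hv
    exact ⟨x, by simpa [and_comm] using hx⟩
  simp only [Finset.mem_insert, Finset.mem_union, Finset.mem_powersetCard, Finset.subset_iff,
    Finset.mem_erase, mem_neighborFinset, not_or]
  constructor
  · intro hX
    refine ⟨hX.1, ?_, ?_, ?_⟩
    · rintro rfl; exact h.not_isOddSet_centers hX
    all_goals
      rintro ⟨hsub, hcard⟩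
      obtain ⟨x, x', -, rfl⟩ := Finset.card_eq_two.mp hcard
      obtain ⟨hxv, hx⟩ := hsub (Finset.mem_insert_self x _)
      obtain ⟨hx'v, hx'⟩ := hsub (Finset.mem_insert_of_mem (Finset.mem_singleton_self x'))
    · exact h.not_isOddSet_leaves hx hxv hx' hx'v hX
    · exact h.symm.not_isOddSet_leaves hx hxv hx' hx'v hX
  · rintro ⟨hcard, hne, hnu, hnv⟩
    obtain ⟨x, y, hxy, rfl⟩ := Finset.card_eq_two.mp hcard
    rcases h.eq_or_eq_or_leaf x with rfl | rfl | ⟨hx, hxv⟩ | ⟨hx, hxu⟩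
    · exact h.isOddSet_center_pair hu' hv' hxy.symm (by rintro rfl; exact hne rfl)
    · exact h.symm.isOddSet_center_pair hv' hu' hxy.symm
        (by rintro rfl; exact hne (Finset.pair_comm _ _))
    all_goals rcases h.eq_or_eq_or_leaf y with rfl | rfl | ⟨hy, hyv⟩ | ⟨hy, hyu⟩
    · rw [Finset.pair_comm]; exact h.isOddSet_center_pair hu' hv' hx.ne' hxv
    · rw [Finset.pair_comm]; exact h.symm.isOddSet_center_pair hv' hu' hxv hx.ne'
    · exact absurd ⟨by simp [hx, hxv, hy, hyv], hcard⟩ hnu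
    · obtain ⟨x', hx', hx'x⟩ := Finset.exists_mem_ne hu x
      rw [Finset.mem_erase, mem_neighborFinset] at hx'
      exact h.isOddSet_leaf_leaf_of_other hx hxv hx'.2 hx'.1 hx'x.symm hy hyu
    · rw [Finset.pair_comm]; exact h.isOddSet_center_pair hu' hv' hxu hx.ne'
    · rw [Finset.pair_comm]; exact h.symm.isOddSet_center_pair hv' hu' hx.ne' hxu
    · obtain ⟨y', hy', hy'y⟩ := Finset.exists_mem_ne hu y
      rw [Finset.mem_erase, mem_neighborFinset] at hy'
      rw [Finset.pair_comm]
      exact h.isOddSet_leaf_leaf_of_other hy hyv hy'.2 hy'.1 hy'y.symm hx hxu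
    · exact absurd ⟨by simp [hx, hxu, hy, hyu], hcard⟩ hnv

theorem numOddSets_add_choose_two (h : IsDoubleStar G u v)
    (hu : 1 < #((G.neighborFinset u).erase v)) (hv : ((G.neighborFinset v).erase u).Nonempty) :
    numOddSets G + (1 + (#((G.neighborFinset u).erase v)).choose 2 +
      (#((G.neighborFinset v).erase u)).choose 2) = (Fintype.card V).choose 2 := by
  set Lu := (G.neighborFinset u).erase v
  set Lv := (G.neighborFinset v).erase u
  have hsub : insert {u, v} (Lu.powersetCard 2 ∪ Lv.powersetCard 2) ⊆ univ.powersetCard 2 := by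
    refine Finset.insert_subset (by simp [h.1.ne]) (Finset.union_subset ?_ ?_) <;>
      exact Finset.powersetCard_mono (subset_univ _)
  have hcenters : {u, v} ∉ Lu.powersetCard 2 ∪ Lv.powersetCard 2 := by
    simp [Finset.insert_subset_iff, Lu, Lv]
  have hdisj : Disjoint (Lu.powersetCard 2) (Lv.powersetCard 2) := by
    refine Finset.disjoint_left.mpr fun X hXu hXv => ?_
    rw [Finset.mem_powersetCard] at hXu hXv
    obtain ⟨x, hx⟩ := Finset.card_pos.mp (hXu.2 ▸ two_pos)
    have hxu := hXu.1 hx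
    have hxv := hXv.1 hx
    simp only [Lu, Lv, Finset.mem_erase, mem_neighborFinset] at hxu hxv
    exact h.not_adj_leaf_of_other hxu.2 hxu.1 hxv.2
  have hodd : univ.filter (IsOddSet G) =
      univ.powersetCard 2 \ insert {u, v} (Lu.powersetCard 2 ∪ Lv.powersetCard 2) := by
    ext X
    simp [h.isOddSet_iff hu hv, Lu, Lv]
  have htotal := Finset.card_sdiff_add_card_eq_card hsub
  rw [Finset.card_insert_of_notMem hcenters, Finset.card_union_of_disjoint hdisj,
    Finset.card_powersetCard, Finset.card_powersetCard, Finset.card_powersetCard,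
    card_univ] at htotal
  rw [numOddSets_eq_card_filter, hodd]
  omega

end Fintype

end IsDoubleStar

theorem numOddSets_doubleStar_general [Fintype V] (T : SimpleGraph V) (u v : V)
    (a b : ℕ) (huv : T.Adj u v)
    (hleaves : ∀ x, x ≠ u → x ≠ v → degree' T x = 1 ∧ (T.Adj x u ∨ T.Adj x v))
    (ha : a = Nat.card {x : V // T.Adj u x ∧ x ≠ v})
    (hb : b = Nat.card {x : V // T.Adj v x ∧ x ≠ u})
    (ha2 : 2 ≤ a) (hb1 : 1 ≤ b) (hba : b ≤ a) (hn : Fintype.card V = a + b + 2) :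
    (2 * numOddSets T : ℝ) =
      (Fintype.card V : ℝ) * ((Fintype.card V : ℝ) - 1) - 2 -
        (a : ℝ) * ((a : ℝ) - 1) - (b : ℝ) * ((b : ℝ) - 1) ∧
    (Fintype.card V : ℝ) * ((Fintype.card V : ℝ) - (a : ℝ)) / 2 ≤ numOddSets T := by
  rw [natCard_adj_ne_eq_card_erase_neighborFinset] at ha hb
  have hcount : numOddSets T + (1 + a.choose 2 + b.choose 2) = (Fintype.card V).choose 2 := by
    rw [ha, hb]
    exact IsDoubleStar.numOddSets_add_choose_two ⟨huv, hleaves⟩ (by omega)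
      (Finset.card_pos.mp (by omega))
  have hcount' : (numOddSets T : ℝ) + (1 + a * (a - 1) / 2 + b * (b - 1) / 2) =
      Fintype.card V * (Fintype.card V - 1) / 2 := by
    simpa only [Nat.cast_add, Nat.cast_one, Nat.cast_choose_two] using
      congrArg (Nat.cast (R := ℝ)) hcount
  have hn' : (Fintype.card V : ℝ) = a + b + 2 := by exact_mod_cast hn
  have hba' : (b : ℝ) ≤ a := by exact_mod_cast hba
  have ha2' : (2 : ℝ) ≤ a := by exact_mod_cast ha2
  refine ⟨by linarith, ?_⟩
  -- `2 * numOddSets T - n (n - a) = b (a - b) + 2 (a - 2)`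
  nlinarith [mul_nonneg (Nat.cast_nonneg b : (0 : ℝ) ≤ b) (sub_nonneg.mpr hba')]

/-- in a double star with centers `u, v` carrying `a ≥ 2` and `1 ≤ b ≤ a`
leaves respectively, the number of odd sets equals `(n(n-1) - 2 - a(a-1) - b(b-1))/2`, which
is at least `n(n-a)/2`. -/
theorem numOddSets_doubleStar [Fintype V] (T : SimpleGraph V) (hT : T.IsTree) (u v : V)
    (a b : ℕ) (huv : T.Adj u v)
    (hleaves : ∀ x, x ≠ u → x ≠ v → degree' T x = 1 ∧ (T.Adj x u ∨ T.Adj x v))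
    (ha : a = Nat.card {x : V // T.Adj u x ∧ x ≠ v})
    (hb : b = Nat.card {x : V // T.Adj v x ∧ x ≠ u})
    (ha2 : 2 ≤ a) (hb1 : 1 ≤ b) (hba : b ≤ a) (hn : Fintype.card V = a + b + 2) :
    (2 * numOddSets T : ℝ) =
      (Fintype.card V : ℝ) * ((Fintype.card V : ℝ) - 1) - 2 -
        (a : ℝ) * ((a : ℝ) - 1) - (b : ℝ) * ((b : ℝ) - 1) ∧
    (Fintype.card V : ℝ) * ((Fintype.card V : ℝ) - (a : ℝ)) / 2 ≤ numOddSets T :=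
  numOddSets_doubleStar_general T u v a b huv hleaves ha hb ha2 hb1 hba hn
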